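/- arXiv:2507.23195 — 7 statements merged into one kernel-verified Lean document; each statement's English description precedes it below -/
import Mathlib

section
/- For all ξ, η in the Euclidean plane ℝ² with ξ ≠ η, the strain-limiting constitutive map satisfies the strict monotonicity inequality ⟨A(ξ) − A(η), ξ − η⟩ > 0, where ⟨·,·⟩ is the standard inner product on ℝ². -/
open RealInnerProductSpace

private lemma strain_aux (μ β α : ℝ) (hμ : 0 < μ) (hβ : 0 < β) (hα : 0 < α)
    {a b : ℝ} (hb : 0 ≤ b) (hba : b < a) :
    b * (1 / (2 * μ * (1 + (β * b) ^ α) ^ (1 / α))) <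
      a * (1 / (2 * μ * (1 + (β * a) ^ α) ^ (1 / α))) := by
  have ha : 0 < a := lt_of_le_of_lt hb hba
  have hDa0 : (0:ℝ) < 1 + (β * a) ^ α := by positivity
  have hDb0 : (0:ℝ) < 1 + (β * b) ^ α := by positivity
  have hDa : (0:ℝ) < (1 + (β * a) ^ α) ^ (1 / α) := Real.rpow_pos_of_pos hDa0 _
  have hDb : (0:ℝ) < (1 + (β * b) ^ α) ^ (1 / α) := Real.rpow_pos_of_pos hDb0 _
  rw [mul_one_div, mul_one_div, div_lt_div_iff₀ (by positivity) (by positivity)]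
  have key : b * (1 + (β * a) ^ α) ^ (1 / α) < a * (1 + (β * b) ^ α) ^ (1 / α) := by
    rcases eq_or_lt_of_le hb with h0 | h0
    · rw [← h0, zero_mul]; positivity
    · -- compare α-powers
      by_contra h
      push_neg at h
      have hpow : (a * (1 + (β * b) ^ α) ^ (1 / α)) ^ α ≤
          (b * (1 + (β * a) ^ α) ^ (1 / α)) ^ α :=
        Real.rpow_le_rpow (by positivity) h hα.le
      have e1 : (a * (1 + (β * b) ^ α) ^ (1 / α)) ^ α = a ^ α * (1 + (β * b) ^ α) := by
        rw [Real.mul_rpow ha.le hDb.le, ← Real.rpow_mul hDb0.le,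
          one_div_mul_cancel hα.ne', Real.rpow_one]
      have e2 : (b * (1 + (β * a) ^ α) ^ (1 / α)) ^ α = b ^ α * (1 + (β * a) ^ α) := by
        rw [Real.mul_rpow h0.le hDa.le, ← Real.rpow_mul hDa0.le,
          one_div_mul_cancel hα.ne', Real.rpow_one]
      rw [e1, e2] at hpow
      have hba' : b ^ α < a ^ α := Real.rpow_lt_rpow hb hba hα
      have hβa : (β * a) ^ α = β ^ α * a ^ α := Real.mul_rpow hβ.le ha.le
      have hβb : (β * b) ^ α = β ^ α * b ^ α := Real.mul_rpow hβ.le h0.le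
      rw [hβa, hβb] at hpow
      nlinarith [Real.rpow_pos_of_pos hβ α]
  calc b * (2 * μ * (1 + (β * a) ^ α) ^ (1 / α))
      = (2 * μ) * (b * (1 + (β * a) ^ α) ^ (1 / α)) := by ring
    _ < (2 * μ) * (a * (1 + (β * b) ^ α) ^ (1 / α)) := by
        exact mul_lt_mul_of_pos_left key (by positivity)
    _ = a * (2 * μ * (1 + (β * b) ^ α) ^ (1 / α)) := by ring

/-- strict monotonicity of the strain-limiting constitutive map
`A ξ = ξ / (2μ (1 + (β‖ξ‖)^α)^{1/α})` on the Euclidean plane. -/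
theorem strain_limiting_strictly_monotone
    (μ β α : ℝ) (hμ : 0 < μ) (hβ : 0 < β) (hα : 0 < α)
    (A : EuclideanSpace ℝ (Fin 2) → EuclideanSpace ℝ (Fin 2))
    (hA : ∀ ξ, A ξ = (1 / (2 * μ * (1 + (β * ‖ξ‖) ^ α) ^ (1 / α))) • ξ) :
    ∀ ξ η : EuclideanSpace ℝ (Fin 2), ξ ≠ η → 0 < ⟪A ξ - A η, ξ - η⟫ := by
  intro ξ η hne
  set a := ‖ξ‖ with ha_def
  set b := ‖η‖ with hb_def
  set c₁ := 1 / (2 * μ * (1 + (β * a) ^ α) ^ (1 / α)) with hc1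
  set c₂ := 1 / (2 * μ * (1 + (β * b) ^ α) ^ (1 / α)) with hc2
  have hc1pos : 0 < c₁ := by rw [hc1]; positivity
  have hc2pos : 0 < c₂ := by rw [hc2]; positivity
  have expand : ⟪A ξ - A η, ξ - η⟫ =
      c₁ * a ^ 2 + c₂ * b ^ 2 - (c₁ + c₂) * ⟪ξ, η⟫ := by
    rw [hA ξ, hA η]
    rw [inner_sub_left, inner_sub_right, inner_sub_right,
      real_inner_smul_left, real_inner_smul_left, real_inner_smul_left,
      real_inner_smul_left, real_inner_self_eq_norm_sq, real_inner_self_eq_norm_sq,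
      real_inner_comm η ξ]
    ring
  rw [expand]
  have hCS : ⟪ξ, η⟫ ≤ a * b := real_inner_le_norm ξ η
  rcases lt_trichotomy a b with hab | hab | hab
  · have key := strain_aux μ β α hμ hβ hα (norm_nonneg ξ) hab
    rw [← hc1, ← hc2] at key
    nlinarith
  · -- equal norms
    have hc : c₁ = c₂ := by rw [hc1, hc2, hab]
    have hsub : (0:ℝ) < ‖ξ - η‖ ^ 2 := by
      have h0 : 0 < ‖ξ - η‖ := norm_sub_pos_iff.mpr hne
      positivity
    have hns : ‖ξ - η‖ ^ 2 = a ^ 2 - 2 * ⟪ξ, η⟫ + b ^ 2 := by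
      rw [norm_sub_sq_real]; try ring
    rw [hns] at hsub
    rw [hc]
    nlinarith
  · have key := strain_aux μ β α hμ hβ hα (norm_nonneg η) hab
    rw [← hc1, ← hc2] at key
    nlinarith
end

section
/- The strain-limiting constitutive map is coercive in the following sense: for every ξ in ℝ², ⟨A(ξ), ξ⟩ ≥ c(‖ξ‖ − 1), where c = 1/(2μ(1 + β^α)^{1/α}) > 0. -/
open RealInnerProductSpace

lemma coercive_key (μ β α r : ℝ) (hμ : 0 < μ) (hβ : 0 < β) (hα : 0 < α)
    (hr : 0 ≤ r) :
    (1 / (2 * μ * (1 + (β * r) ^ α) ^ (1 / α))) * r ^ 2 ≥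
      (1 / (2 * μ * (1 + β ^ α) ^ (1 / α))) * (r - 1) := by
  have hYpos : (0:ℝ) < (1 + β ^ α) ^ (1 / α) :=
    Real.rpow_pos_of_pos (by positivity) _
  have hXpos : (0:ℝ) < (1 + (β * r) ^ α) ^ (1 / α) :=
    Real.rpow_pos_of_pos (by positivity) _
  rcases le_or_gt r 1 with h1 | h1
  · have : (1 / (2 * μ * (1 + β ^ α) ^ (1 / α))) * (r - 1) ≤ 0 := by
      apply mul_nonpos_of_nonneg_of_nonpos
      · positivity
      · linarith
    have : (0:ℝ) ≤ (1 / (2 * μ * (1 + (β * r) ^ α) ^ (1 / α))) * r ^ 2 := by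
      positivity
    linarith
  · have hr1 : (1:ℝ) ≤ r := le_of_lt h1
    have hrpos : (0:ℝ) < r := by linarith
    -- key: (1 + (βr)^α)^{1/α} ≤ r (1+β^α)^{1/α}
    have hmul : (β * r) ^ α = β ^ α * r ^ α :=
      Real.mul_rpow hβ.le hr
    have hra : (1:ℝ) ≤ r ^ α := Real.one_le_rpow hr1 hα.le
    have hle : 1 + (β * r) ^ α ≤ r ^ α * (1 + β ^ α) := by
      rw [hmul]; nlinarith [Real.rpow_nonneg hβ.le α]
    have hkey : (1 + (β * r) ^ α) ^ (1 / α) ≤ r * (1 + β ^ α) ^ (1 / α) := by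
      calc (1 + (β * r) ^ α) ^ (1 / α)
          ≤ (r ^ α * (1 + β ^ α)) ^ (1 / α) := by
            apply Real.rpow_le_rpow (by positivity) hle (by positivity)
        _ = r * (1 + β ^ α) ^ (1 / α) := by
            rw [Real.mul_rpow (by positivity) (by positivity),
              ← Real.rpow_mul hr, mul_one_div, div_self hα.ne', Real.rpow_one]
    -- now compare
    have h2 : (1 / (2 * μ * (1 + (β * r) ^ α) ^ (1 / α))) * r ^ 2 ≥
        (1 / (2 * μ * (1 + β ^ α) ^ (1 / α))) * r := by
      rw [ge_iff_le, div_mul_eq_mul_div, div_mul_eq_mul_div,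
        div_le_div_iff₀ (by positivity) (by positivity)]
      have : r * (2 * μ * (1 + (β * r) ^ α) ^ (1 / α)) ≤
          r * (2 * μ * (r * (1 + β ^ α) ^ (1 / α))) := by
        apply mul_le_mul_of_nonneg_left _ hrpos.le
        apply mul_le_mul_of_nonneg_left hkey (by positivity)
      nlinarith
    have h3 : (1 / (2 * μ * (1 + β ^ α) ^ (1 / α))) * (r - 1) ≤
        (1 / (2 * μ * (1 + β ^ α) ^ (1 / α))) * r := by
      apply mul_le_mul_of_nonneg_left (by linarith) (by positivity)
    linarith

/-- coercivity of the strain-limiting constitutive map: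
`⟪A ξ, ξ⟫ ≥ c (‖ξ‖ - 1)` with `c = 1/(2μ(1 + β^α)^{1/α}) > 0`. -/
theorem strain_limiting_coercive
    (μ β α : ℝ) (hμ : 0 < μ) (hβ : 0 < β) (hα : 0 < α)
    (A : EuclideanSpace ℝ (Fin 2) → EuclideanSpace ℝ (Fin 2))
    (hA : ∀ ξ, A ξ = (1 / (2 * μ * (1 + (β * ‖ξ‖) ^ α) ^ (1 / α))) • ξ) :
    0 < 1 / (2 * μ * (1 + β ^ α) ^ (1 / α)) ∧
      ∀ ξ : EuclideanSpace ℝ (Fin 2),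
        ⟪A ξ, ξ⟫ ≥ (1 / (2 * μ * (1 + β ^ α) ^ (1 / α))) * (‖ξ‖ - 1) := by
  have hYpos : (0:ℝ) < (1 + β ^ α) ^ (1 / α) :=
    Real.rpow_pos_of_pos (by positivity) _
  refine ⟨by positivity, fun ξ => ?_⟩
  rw [hA ξ, real_inner_smul_left, real_inner_self_eq_norm_sq]
  exact coercive_key μ β α ‖ξ‖ hμ hβ hα (norm_nonneg ξ)
end

section
/- The function f(r) := rΨ₁(r) = r/(2μ(1 + (βr)^α)^{1/α}) is strictly increasing on the interval [0, ∞). -/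
/-- the function `f(r) = r Ψ₁(r) = r/(2μ(1 + (βr)^α)^{1/α})` is strictly
increasing on `[0, ∞)`. -/
theorem strain_limiting_f_strictMonoOn
    (μ β α : ℝ) (hμ : 0 < μ) (hβ : 0 < β) (hα : 0 < α)
    (f : ℝ → ℝ) (hf : ∀ r, f r = r / (2 * μ * (1 + (β * r) ^ α) ^ (1 / α))) :
    StrictMonoOn f (Set.Ici (0 : ℝ)) := by
  intro x hx y hy hxy
  simp only [Set.mem_Ici] at hx hy
  rw [hf, hf]
  have hy0 : 0 < y := lt_of_le_of_lt hx hxy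
  have hpx : (0:ℝ) < 1 + (β * x) ^ α := by
    have := Real.rpow_nonneg (mul_nonneg hβ.le hx) α
    linarith
  have hpy : (0:ℝ) < 1 + (β * y) ^ α := by
    have := Real.rpow_nonneg (mul_nonneg hβ.le hy0.le) α
    linarith
  have hA : (0:ℝ) < (1 + (β * x) ^ α) ^ (1 / α) := Real.rpow_pos_of_pos hpx _
  have hB : (0:ℝ) < (1 + (β * y) ^ α) ^ (1 / α) := Real.rpow_pos_of_pos hpy _
  rw [div_lt_div_iff₀ (by positivity) (by positivity)]
  -- goal: x * (2 * μ * B) < y * (2 * μ * A)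
  have main : x * (1 + (β * y) ^ α) ^ (1 / α) < y * (1 + (β * x) ^ α) ^ (1 / α) := by
    rcases eq_or_lt_of_le hx with h0 | hx0
    · rw [← h0, zero_mul]
      positivity
    · -- key inequality on α-powers
      have key : x ^ α * (1 + (β * y) ^ α) < y ^ α * (1 + (β * x) ^ α) := by
        have hxa : x ^ α < y ^ α := Real.rpow_lt_rpow hx hxy hα
        rw [Real.mul_rpow hβ.le hx, Real.mul_rpow hβ.le hy0.le]
        nlinarith [Real.rpow_nonneg hβ.le α]
      have hL : (0:ℝ) ≤ x ^ α * (1 + (β * y) ^ α) :=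
        mul_nonneg (Real.rpow_nonneg hx _) hpy.le
      have step := Real.rpow_lt_rpow hL key (by positivity : (0:ℝ) < 1/α)
      rw [Real.mul_rpow (Real.rpow_nonneg hx _) hpy.le,
          Real.mul_rpow (Real.rpow_nonneg hy0.le _) hpx.le,
          one_div, Real.rpow_rpow_inv hx hα.ne', Real.rpow_rpow_inv hy0.le hα.ne',
          ← one_div] at step
      exact step
  calc x * (2 * μ * (1 + (β * y) ^ α) ^ (1 / α))
      = 2 * μ * (x * (1 + (β * y) ^ α) ^ (1 / α)) := by ring
    _ < 2 * μ * (y * (1 + (β * x) ^ α) ^ (1 / α)) := by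
        exact mul_lt_mul_of_pos_left main (by positivity)
    _ = y * (2 * μ * (1 + (β * x) ^ α) ^ (1 / α)) := by ring
end

section
/- The function f(r) := rΨ₁(r) = r/(2μ(1 + (βr)^α)^{1/α}) maps the half-line [0, ∞) bijectively onto the half-open interval [0, 1/(2μβ)). -/
/-!
Substituting `s = β r` gives `f r = (2μβ)⁻¹ · s / (1 + s^α)^{1/α}`, and for `s ≥ 0`
`s / (1 + s^α)^{1/α} = (t / (1 + t))^{1/α}` with `t = s^α`. So `f` is a composite of the
bijections `r ↦ β r` of `[0, ∞)`, `s ↦ s^α` of `[0, ∞)`, `t ↦ t / (1 + t)` from `[0, ∞)` onto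
`[0, 1)`, `u ↦ u^{1/α}` of `[0, 1)`, and `v ↦ v / (2μβ)` from `[0, 1)` onto `[0, 1/(2μβ))`.
-/

open Set

namespace Real

theorem invOn_rpow_inv_rpow {p : ℝ} (hp : p ≠ 0) :
    InvOn (fun x : ℝ => x ^ p⁻¹) (· ^ p) (Ici 0) (Ici 0) :=
  ⟨fun _ hx => rpow_rpow_inv hx hp, fun _ hx => rpow_inv_rpow hx hp⟩

theorem bijOn_rpow_Ici {p : ℝ} (hp : 0 < p) : BijOn (fun x : ℝ => x ^ p) (Ici 0) (Ici 0) :=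
  (invOn_rpow_inv_rpow hp.ne').bijOn (fun _ hx => rpow_nonneg hx _)
    (fun _ hx => rpow_nonneg hx _)

theorem bijOn_rpow_Ico_zero_one {p : ℝ} (hp : 0 < p) : BijOn (fun x : ℝ => x ^ p) (Ico 0 1) (Ico 0 1) :=
  ((invOn_rpow_inv_rpow hp.ne').mono Ico_subset_Ici_self Ico_subset_Ici_self).bijOn
    (fun _ hx => ⟨rpow_nonneg hx.1 _, rpow_lt_one hx.1 hx.2 hp⟩)
    (fun _ hx => ⟨rpow_nonneg hx.1 _, rpow_lt_one hx.1 hx.2 (inv_pos.2 hp)⟩)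

end Real

theorem bijOn_div_one_add_self : BijOn (fun t : ℝ => t / (1 + t)) (Ici 0) (Ico 0 1) := by
  refine InvOn.bijOn (f' := fun u => u / (1 - u)) ⟨fun t ht => ?_, fun u hu => ?_⟩
    (fun t ht => ?_) (fun u hu => ?_)
  · have : (1 : ℝ) + t ≠ 0 := by simp only [mem_Ici] at ht; positivity
    field_simp
    ring
  · have : (1 : ℝ) - u ≠ 0 := (sub_pos.2 hu.2).ne'
    field_simp
    ring
  · simp only [mem_Ici] at ht
    exact ⟨by positivity, (div_lt_one (by positivity)).2 (lt_one_add t)⟩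
  · exact div_nonneg hu.1 (sub_pos.2 hu.2).le

theorem div_rpow_one_add_rpow_eq {α s : ℝ} (hα : α ≠ 0) (hs : 0 ≤ s) :
    s / (1 + s ^ α) ^ (1 / α) = (s ^ α / (1 + s ^ α)) ^ (1 / α) := by
  have hsα : 0 ≤ s ^ α := Real.rpow_nonneg hs α
  rw [Real.div_rpow hsα (by positivity), one_div, Real.rpow_rpow_inv hs hα]

theorem bijOn_div_rpow_one_add_rpow {α : ℝ} (hα : 0 < α) :
    BijOn (fun s : ℝ => s / (1 + s ^ α) ^ (1 / α)) (Ici 0) (Ico 0 1) :=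
  ((Real.bijOn_rpow_Ico_zero_one (one_div_pos.2 hα)).comp
    (bijOn_div_one_add_self.comp (Real.bijOn_rpow_Ici hα))).congr
    fun _ hs => (div_rpow_one_add_rpow_eq hα.ne' hs).symm

/-- the function `f(r) = r/(2μ(1 + (βr)^α)^{1/α})` maps `[0, ∞)`
bijectively onto `[0, 1/(2μβ))`. -/
theorem strain_limiting_f_bijOn
    (μ β α : ℝ) (hμ : 0 < μ) (hβ : 0 < β) (hα : 0 < α)
    (f : ℝ → ℝ) (hf : ∀ r, f r = r / (2 * μ * (1 + (β * r) ^ α) ^ (1 / α))) :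
    Set.BijOn f (Set.Ici (0 : ℝ)) (Set.Ico 0 (1 / (2 * μ * β))) := by
  rw [one_div]
  have hc : 0 < (2 * μ * β)⁻¹ := by positivity
  have hscale : BijOn ((2 * μ * β)⁻¹ * ·) (Ico 0 1) (Ico 0 (2 * μ * β)⁻¹) := by
    have := (mul_right_injective₀ hc.ne').bijOn_image (s := Ico (0 : ℝ) 1)
    rwa [image_mul_left_Ico hc, mul_zero, mul_one] at this
  have hdilate : BijOn (β * ·) (Ici 0) (Ici 0) := by
    have := (mul_right_injective₀ hβ.ne').bijOn_image (s := Ici (0 : ℝ))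
    rwa [image_mul_left_Ici hβ, mul_zero] at this
  refine (hscale.comp ((bijOn_div_rpow_one_add_rpow hα).comp hdilate)).congr fun r _ => ?_
  simp only [Function.comp_apply, hf]
  field_simp
end

section
/- The strain-limiting constitutive map A : ℝ² → ℝ² is a bijection from the Euclidean plane ℝ² onto the open ball of radius 1/(2μβ) centered at the origin; that is, every strain vector ε with ‖ε‖ < 1/(2μβ) arises from exactly one stress vector T via ε = Ψ₁(‖T‖)T, and no strain of norm ≥ 1/(2μβ) is attained. -/
/-!
The map is radial, `A ξ = g ‖ξ‖ • ξ` with `g > 0`, so it is a bijection onto the ball of radius `R`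
as soon as its profile `r ↦ g r * r` is a bijection from `[0, ∞)` onto `[0, R)`. Up to rescaling
both variables, that profile is `h t = t / (1 + t ^ α) ^ (1 / α)`, and `1 - h t ^ α = 1 / (1 + t ^ α)`
shows that `s ↦ s / (1 - s ^ α) ^ (1 / α)` inverts it.
-/

open Set

theorem bijOn_div_one_add_rpow_rpow_inv {α : ℝ} (hα : 0 < α) :
    BijOn (fun t : ℝ => t / (1 + t ^ α) ^ α⁻¹) (Ici 0) (Ico 0 1) := by
  have div_rpow_inv_rpow {x y : ℝ} (hx : 0 ≤ x) (hy : 0 ≤ y) :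
      (x / y ^ α⁻¹) ^ α = x ^ α / y := by
    rw [Real.div_rpow hx (by positivity), Real.rpow_inv_rpow hy hα.ne']
  refine InvOn.bijOn (f' := fun s => s / (1 - s ^ α) ^ α⁻¹) ⟨fun t ht => ?_, fun s hs => ?_⟩
    (fun t ht => ?_) (fun s hs => ?_)
  · replace ht : 0 ≤ t := ht
    have htα : 0 ≤ t ^ α := by positivity
    have one_sub_rpow : 1 - (t / (1 + t ^ α) ^ α⁻¹) ^ α = (1 + t ^ α)⁻¹ := by
      rw [div_rpow_inv_rpow ht (by linarith)]
      field_simp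
      ring
    simp only
    rw [one_sub_rpow, Real.inv_rpow (by linarith), div_inv_eq_mul, div_mul_cancel₀]
    exact (Real.rpow_pos_of_pos (by linarith) _).ne'
  · obtain ⟨hs0, hs1⟩ : 0 ≤ s ∧ s < 1 := hs
    have hsα : s ^ α < 1 := Real.rpow_lt_one hs0 hs1 hα
    have hne : 1 - s ^ α ≠ 0 := by linarith
    have one_add_rpow : 1 + (s / (1 - s ^ α) ^ α⁻¹) ^ α = (1 - s ^ α)⁻¹ := by
      rw [div_rpow_inv_rpow hs0 (by linarith)]
      field_simp
      ring
    simp only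
    rw [one_add_rpow, Real.inv_rpow (by linarith), div_inv_eq_mul, div_mul_cancel₀]
    exact (Real.rpow_pos_of_pos (by linarith) _).ne'
  · replace ht : 0 ≤ t := ht
    have hpos : 0 < (1 + t ^ α) ^ α⁻¹ := by positivity
    refine ⟨div_nonneg ht hpos.le, (div_lt_one hpos).2 ?_⟩
    exact (Real.lt_rpow_inv_iff_of_pos ht (by positivity) hα).2 (lt_one_add _)
  · exact div_nonneg hs.1 (Real.rpow_nonneg (sub_nonneg.2 (Real.rpow_le_one hs.1 hs.2.le hα.le)) _)

theorem bijOn_mul_comp_mul_Ici_Ico {f : ℝ → ℝ} (hf : BijOn f (Ici 0) (Ico 0 1)) {a b : ℝ}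
    (ha : 0 < a) (hb : 0 < b) : BijOn (fun r => b * f (a * r)) (Ici 0) (Ico 0 b) := by
  have scale_Ici : BijOn (fun r => a * r) (Ici 0) (Ici 0) := by
    simpa [image_mul_left_Ici ha] using (mul_right_injective₀ ha.ne').injOn.bijOn_image (s := Ici 0)
  have scale_Ico : BijOn (fun r => b * r) (Ico 0 1) (Ico 0 b) := by
    simpa [image_mul_left_Ico hb] using (mul_right_injective₀ hb.ne').injOn.bijOn_image (s := Ico 0 1)
  exact (scale_Ico.comp hf).comp scale_Ici

theorem bijOn_smul_norm_univ_ball {E : Type*} [NormedAddCommGroup E] [NormedSpace ℝ E]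
    {g : ℝ → ℝ} {R : ℝ} (hg : ∀ r, 0 ≤ r → 0 < g r)
    (hbij : BijOn (fun r => g r * r) (Ici 0) (Ico 0 R)) :
    BijOn (fun ξ : E => g ‖ξ‖ • ξ) univ (Metric.ball 0 R) := by
  have norm_eq (ξ : E) : ‖g ‖ξ‖ • ξ‖ = g ‖ξ‖ * ‖ξ‖ := by
    rw [norm_smul, Real.norm_of_nonneg (hg _ (norm_nonneg ξ)).le]
  refine ⟨fun ξ _ => ?_, fun x _ y _ hxy => ?_, fun ε hε => ?_⟩
  · rw [Metric.mem_ball, dist_zero_right, norm_eq]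
    exact (hbij.mapsTo (norm_nonneg ξ : ‖ξ‖ ∈ Ici 0)).2
  · have hnorm : ‖x‖ = ‖y‖ := hbij.injOn (norm_nonneg x) (norm_nonneg y) (by
      simpa only [norm_eq] using congrArg norm hxy)
    simp only [hnorm] at hxy
    exact smul_right_injective E (hg _ (norm_nonneg y)).ne' hxy
  · rw [Metric.mem_ball, dist_zero_right] at hε
    obtain ⟨r, hr : 0 ≤ r, hgr : g r * r = ‖ε‖⟩ :=
      hbij.surjOn (⟨norm_nonneg ε, hε⟩ : ‖ε‖ ∈ Ico 0 R)
    rcases eq_or_ne ε 0 with rfl | hε0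
    · exact ⟨0, trivial, by simp⟩
    have hε0' : ‖ε‖ ≠ 0 := norm_ne_zero_iff.2 hε0
    refine ⟨(r / ‖ε‖) • ε, trivial, ?_⟩
    have hnorm : ‖(r / ‖ε‖) • ε‖ = r := by
      rw [norm_smul, Real.norm_of_nonneg (by positivity), div_mul_cancel₀ _ hε0']
    simp only [hnorm, smul_smul]
    rw [← mul_div_assoc, hgr, div_self hε0', one_smul]

open RealInnerProductSpace

/-- the strain-limiting constitutive map `A` is a bijection from the
Euclidean plane onto the open ball of radius `1/(2μβ)` centered at the origin. -/
theorem strain_limiting_bijection_onto_ball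
    (μ β α : ℝ) (hμ : 0 < μ) (hβ : 0 < β) (hα : 0 < α)
    (A : EuclideanSpace ℝ (Fin 2) → EuclideanSpace ℝ (Fin 2))
    (hA : ∀ ξ, A ξ = (1 / (2 * μ * (1 + (β * ‖ξ‖) ^ α) ^ (1 / α))) • ξ) :
    Set.BijOn A Set.univ (Metric.ball (0 : EuclideanSpace ℝ (Fin 2)) (1 / (2 * μ * β))) := by
  set g : ℝ → ℝ := fun r => 1 / (2 * μ * (1 + (β * r) ^ α) ^ (1 / α))
  have hg : ∀ r, 0 ≤ r → 0 < g r := fun r hr => by positivity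
  have hprofile : BijOn (fun r => g r * r) (Ici 0) (Ico 0 (1 / (2 * μ * β))) := by
    refine (bijOn_mul_comp_mul_Ici_Ico (bijOn_div_one_add_rpow_rpow_inv hα) hβ
      (by positivity)).congr fun r _ => ?_
    simp only [g, one_div]
    field_simp
  rw [show A = fun ξ => g ‖ξ‖ • ξ from funext hA]
  exact bijOn_smul_norm_univ_ball hg hprofile
end

section
/- In the case α = 1, the constitutive relation can be inverted explicitly: if T and ε in ℝ² satisfy ε = T/(2μ(1 + β‖T‖)), then 2μβ‖ε‖ < 1 and T = (2μ/(1 − 2μβ‖ε‖)) ε. -/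
/-! Writing `s = β‖T‖`, the relation gives `2μβ‖ε‖ = s / (1 + s)`, hence
`1 - 2μβ‖ε‖ = (1 + s)⁻¹ > 0`, and multiplying `ε` by `2μ (1 + s)` recovers `T`. -/

namespace StrainLimiting

variable {E : Type*} [NormedAddCommGroup E] {μ β : ℝ}

lemma one_add_mul_norm_pos (hβ : 0 ≤ β) (T : E) : 0 < 1 + β * ‖T‖ := by
  positivity

variable [NormedSpace ℝ E]

noncomputable def strainOfStress (μ β : ℝ) (T : E) : E :=
  (1 / (2 * μ * (1 + β * ‖T‖))) • T

lemma norm_strainOfStress (hμ : 0 < μ) (hβ : 0 ≤ β) (T : E) :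
    ‖strainOfStress μ β T‖ = ‖T‖ / (2 * μ * (1 + β * ‖T‖)) := by
  have := one_add_mul_norm_pos hβ T
  rw [strainOfStress, norm_smul, Real.norm_of_nonneg (by positivity), one_div_mul_eq_div]

lemma one_sub_mul_norm_strainOfStress (hμ : 0 < μ) (hβ : 0 ≤ β) (T : E) :
    1 - 2 * μ * β * ‖strainOfStress μ β T‖ = (1 + β * ‖T‖)⁻¹ := by
  have := one_add_mul_norm_pos hβ T
  rw [norm_strainOfStress hμ hβ]
  field_simp
  ring

lemma smul_strainOfStress (hμ : 0 < μ) (hβ : 0 ≤ β) (T : E) :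
    (2 * μ * (1 + β * ‖T‖)) • strainOfStress μ β T = T := by
  have := one_add_mul_norm_pos hβ T
  rw [strainOfStress, one_div]
  exact smul_inv_smul₀ (by positivity) T

end StrainLimiting

open StrainLimiting in
/-- explicit inversion of the strain-limiting constitutive relation in the
case `α = 1`: if `ε = T/(2μ(1 + β‖T‖))` then `2μβ‖ε‖ < 1` and
`T = (2μ/(1 − 2μβ‖ε‖)) ε`. -/
theorem strain_limiting_explicit_inverse_alpha_one
    (μ β : ℝ) (hμ : 0 < μ) (hβ : 0 < β)
    (T ε : EuclideanSpace ℝ (Fin 2))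
    (hε : ε = (1 / (2 * μ * (1 + β * ‖T‖))) • T) :
    2 * μ * β * ‖ε‖ < 1 ∧ T = (2 * μ / (1 - 2 * μ * β * ‖ε‖)) • ε := by
  change ε = strainOfStress μ β T at hε
  have hgap := one_sub_mul_norm_strainOfStress hμ hβ.le T
  rw [← hε] at hgap
  refine ⟨?_, ?_⟩
  · linarith [inv_pos.mpr (one_add_mul_norm_pos hβ.le T)]
  · rw [hgap, div_inv_eq_mul, hε, smul_strainOfStress hμ hβ.le]
end

section
/- For all ξ, η in ℝ², the strain-limiting constitutive map satisfies the monotonicity transfer inequality ⟨A(ξ) − A(η), ξ − η⟩ ≥ (f(‖ξ‖) − f(‖η‖)) (‖ξ‖ − ‖η‖), where f(r) = rΨ₁(r); in particular the right-hand side is nonnegative since f is increasing. -/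
open RealInnerProductSpace

/-- the monotonicity transfer inequality
`⟪A ξ − A η, ξ − η⟫ ≥ (f(‖ξ‖) − f(‖η‖))(‖ξ‖ − ‖η‖)` where `f(r) = r Ψ₁(r)`. -/
theorem strain_limiting_monotonicity_transfer
    (μ β α : ℝ) (hμ : 0 < μ) (hβ : 0 < β) (hα : 0 < α)
    (Ψ₁ : ℝ → ℝ) (hΨ : ∀ r, Ψ₁ r = 1 / (2 * μ * (1 + (β * r) ^ α) ^ (1 / α)))
    (f : ℝ → ℝ) (hf : ∀ r, f r = r * Ψ₁ r)
    (A : EuclideanSpace ℝ (Fin 2) → EuclideanSpace ℝ (Fin 2))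
    (hA : ∀ ξ, A ξ = Ψ₁ ‖ξ‖ • ξ) :
    ∀ ξ η : EuclideanSpace ℝ (Fin 2),
      ⟪A ξ - A η, ξ - η⟫ ≥ (f ‖ξ‖ - f ‖η‖) * (‖ξ‖ - ‖η‖) := by
  intro ξ η
  have hpos : ∀ r : ℝ, 0 ≤ r → 0 ≤ Ψ₁ r := by
    intro r hr
    rw [hΨ]
    have h1 : (0:ℝ) ≤ (β * r) ^ α := Real.rpow_nonneg (by positivity) α
    have h2 : (0:ℝ) < (1 + (β * r) ^ α) ^ (1/α) :=
      Real.rpow_pos_of_pos (by linarith) _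
    positivity
  have ha := hpos ‖ξ‖ (norm_nonneg _)
  have hb := hpos ‖η‖ (norm_nonneg _)
  have hcs : ⟪ξ, η⟫ ≤ ‖ξ‖ * ‖η‖ := real_inner_le_norm ξ η
  have hsym : ⟪η, ξ⟫ = ⟪ξ, η⟫ := real_inner_comm ξ η
  have hx : ⟪ξ, ξ⟫ = ‖ξ‖ * ‖ξ‖ := real_inner_self_eq_norm_mul_norm ξ
  have hy : ⟪η, η⟫ = ‖η‖ * ‖η‖ := real_inner_self_eq_norm_mul_norm η
  rw [hA, hA, hf, hf]
  rw [inner_sub_left, inner_sub_right, inner_sub_right,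
    real_inner_smul_left, real_inner_smul_left,
    real_inner_smul_left, real_inner_smul_left]
  rw [hsym, hx, hy]
  nlinarith [mul_nonneg (add_nonneg ha hb) (sub_nonneg.mpr hcs)]
end
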